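/- Assume φ̄ ∈ C²([0,1];𝓗) solves the MEP problem and assumption (A) is satisfied. Then λ̄ ∈ C¹([0,1];ℝ) and (λ̄'(0), φ̄'(0)), (λ̄'(s̄), φ̄'(s̄)), (λ̄'(1), φ̄'(1)) are eigenpairs of the Hessians at the critical points, i.e. ∇²E(y_M^A)φ̄'(0) = λ̄'(0)·φ̄'(0), ∇²E(y_S)φ̄'(s̄) = λ̄'(s̄)·φ̄'(s̄), and ∇²E(y_M^B)φ̄'(1) = λ̄'(1)·φ̄'(1). -/

import Mathlib

noncomputable section

open Set
open scoped RealInnerProductSpace Topology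

variable {H : Type*} [NormedAddCommGroup H] [InnerProductSpace ℝ H] [CompleteSpace H]

/-- Orthogonal projection of `y` onto the span of `v` (`P_v y`). -/
def Pproj (v y : H) : H := ⟪y, ‖v‖⁻¹ • v⟫ • (‖v‖⁻¹ • v)

/-- Projection of `y` onto the orthogonal complement of `v` (`P_v^⊥ y`). -/
def Pperp (v y : H) : H := y - Pproj v y

/-- `f` is `C¹` on `[a,b]` with derivative `f'`. -/
def C1On {F : Type*} [NormedAddCommGroup F] [NormedSpace ℝ F] (a b : ℝ) (f f' : ℝ → F) : Prop :=
  (∀ α ∈ Icc a b, HasDerivWithinAt f (f' α) (Icc a b) α) ∧ ContinuousOn f' (Icc a b)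

/-- `f` is `C²` on `[a,b]`. -/
def C2On {F : Type*} [NormedAddCommGroup F] [NormedSpace ℝ F] (a b : ℝ) (f f' f'' : ℝ → F) : Prop :=
  C1On a b f f' ∧ C1On a b f' f''

/-- The length `L(φ)` of a curve with derivative `φ'`. -/
def len {F : Type*} [NormedAddCommGroup F] (φ' : ℝ → F) : ℝ := ∫ s in (0:ℝ)..1, ‖φ' s‖

/-- `Γ(φ)(α) = ∫₀^α |φ'| − α L(φ)`. -/
def Gam {F : Type*} [NormedAddCommGroup F] (φ' : ℝ → F) (α : ℝ) : ℝ :=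
  (∫ s in (0:ℝ)..α, ‖φ' s‖) - α * len φ'

/-- The admissible class `U` of regular curves joining `yA` to `yB`. -/
def InU (yA yB : H) (φ φ' : ℝ → H) : Prop :=
  C1On 0 1 φ φ' ∧ φ 0 = yA ∧ φ 1 = yB ∧ ∀ α ∈ Icc (0:ℝ) 1, φ' α ≠ 0

/-- The MEP equations. -/
def SolvesMEP (E : H → ℝ) (φ φ' : ℝ → H) : Prop :=
  (∀ α ∈ Icc (0:ℝ) 1, Pperp (φ' α) (gradient E (φ α)) = 0) ∧
  (∀ α ∈ Icc (0:ℝ) 1, Gam φ' α = 0)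

/-- Strong local minimizer. -/
def IsStrongMin (E : H → ℝ) (hess : H → H →L[ℝ] H) (y : H) : Prop :=
  gradient E y = 0 ∧ ∃ c > 0, ∀ u : H, c * ‖u‖ ^ 2 ≤ ⟪hess y u, u⟫

/-- Index-1 saddle point. -/
def IsIndex1Saddle (E : H → ℝ) (hess : H → H →L[ℝ] H) (y : H) : Prop :=
  gradient E y = 0 ∧
    ∃ v₁ : H, v₁ ≠ 0 ∧ (∃ l < (0:ℝ), hess y v₁ = l • v₁) ∧
      ∃ c > 0, ∀ u : H, ⟪u, v₁⟫ = 0 → c * ‖u‖ ^ 2 ≤ ⟪hess y u, u⟫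

/-- Assumption (A). -/
def AssumpA (E : H → ℝ) (hess : H → H →L[ℝ] H) (yA yB : H)
    (φb φb' φb'' : ℝ → H) (sbar : ℝ) : Prop :=
  C2On 0 1 φb φb' φb'' ∧ InU yA yB φb φb' ∧ SolvesMEP E φb φb' ∧
  sbar ∈ Ioo (0:ℝ) 1 ∧
  IsStrongMin E hess yA ∧ IsStrongMin E hess yB ∧
  IsIndex1Saddle E hess (φb sbar) ∧
  ∀ α ∈ Icc (0:ℝ) 1, gradient E (φb α) = 0 → α = 0 ∨ α = sbar ∨ α = 1

/-- `λ̄(α) = L(φ̄)⁻² (∇E(φ̄(α)), φ̄'(α))`. -/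
def lamBar (E : H → ℝ) (φ φ' : ℝ → H) (α : ℝ) : ℝ :=
  ((len φ') ^ 2)⁻¹ * ⟪gradient E (φ α), φ' α⟫

/-- The MEP operator `𝓕`. -/
def Fop (E : H → ℝ) (sbar σA σB : ℝ) (φ φ' : ℝ → H) (α : ℝ) : H :=
  Pperp (φ' α) (gradient E (φ α))
    - ((‖φ' α‖ - len φ') / len φ') • Pproj (φ' α) (gradient E (φ α))
    + (α * (α - 1) * ‖φ' α‖ / (sbar * (sbar - 1) * len φ')) •
        Pproj (φ' α) (gradient E (φ sbar))
    + ((σA + σB) * (Gam φ' α - α * (α - 1) / (sbar * (sbar - 1)) * Gam φ' sbar)) •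
        (‖φ' α‖⁻¹ • φ' α)

/-- Membership in the image space `Y`. -/
def MemY {F : Type*} [NormedAddCommGroup F] [NormedSpace ℝ F] (sbar : ℝ) (f : ℝ → F) : Prop :=
  ContinuousOn f (Icc (0:ℝ) 1) ∧ f 0 = 0 ∧ f 1 = 0 ∧
  DifferentiableWithinAt ℝ f (Icc (0:ℝ) 1) 0 ∧
  DifferentiableWithinAt ℝ f (Icc (0:ℝ) 1) sbar ∧
  DifferentiableWithinAt ℝ f (Icc (0:ℝ) 1) 1

/-- Membership in the space `X`. -/
def MemX {F : Type*} [NormedAddCommGroup F] [NormedSpace ℝ F] (ψ ψ' : ℝ → F) : Prop :=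
  C1On 0 1 ψ ψ' ∧ ψ 0 = 0 ∧ ψ 1 = 0

/-- The `C¹` (and `X`) norm. -/
def normC1 {F : Type*} [NormedAddCommGroup F] (ψ ψ' : ℝ → F) : ℝ :=
  (⨆ α : Icc (0:ℝ) 1, ‖ψ (α : ℝ)‖) + ⨆ α : Icc (0:ℝ) 1, ‖ψ' (α : ℝ)‖

/-- The weighted norm on `Y`. -/
def normY {F : Type*} [NormedAddCommGroup F] (sbar : ℝ) (f : ℝ → F) : ℝ :=
  (⨆ α : Ioo (0:ℝ) 1, ‖f (α : ℝ)‖ / |(α : ℝ) * ((α : ℝ) - 1)|) +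
    ⨆ α : ↥(Icc (0:ℝ) 1 \ {sbar}), ‖f (α : ℝ) - f sbar‖ / |(α : ℝ) - sbar|

/-- `∫₀¹ (φ̄'(s), ψ'(s))/|φ̄'(s)| ds`. -/
def gInt (φb' ψ' : ℝ → H) : ℝ := ∫ s in (0:ℝ)..1, ⟪φb' s, ψ' s⟫ / ‖φb' s‖

/-- `g_ψ(α)` (the linearisation `δΓ(φ̄)ψ`). -/
def gFun (φb' ψ' : ℝ → H) (α : ℝ) : ℝ :=
  (∫ s in (0:ℝ)..α, ⟪φb' s, ψ' s⟫ / ‖φb' s‖) - α * gInt φb' ψ'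

/-- `g_ψ'(α)`. -/
def gFun' (φb' ψ' : ℝ → H) (α : ℝ) : ℝ := ⟪φb' α, ψ' α⟫ / ‖φb' α‖ - gInt φb' ψ'

/-- The linearised MEP operator `T = δ𝓕(φ̄)`. -/
def Tlin (E : H → ℝ) (hess : H → H →L[ℝ] H) (φb φb' : ℝ → H)
    (sbar σA σB : ℝ) (ψ ψ' : ℝ → H) (α : ℝ) : H :=
  Pperp (φb' α) (hess (φb α) (ψ α) - lamBar E φb φb' α • ψ' α)
    + (α * (α - 1) / (sbar * (sbar - 1))) • Pproj (φb' α) (hess (φb sbar) (ψ sbar))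
    + ((σA + σB) * (gFun φb' ψ' α - α * (α - 1) / (sbar * (sbar - 1)) * gFun φb' ψ' sbar)
        - lamBar E φb φb' α * gFun' φb' ψ' α) • (‖φb' α‖⁻¹ • φb' α)

/-- Assumption (B). -/
def AssumpB (hess : H → H →L[ℝ] H) (yA yB vA vB : H) (σA σB : ℝ) : Prop :=
  hess yA vA = σA • vA ∧ hess yB vB = σB • vB ∧
  (∀ μ ∈ spectrum ℝ (hess yA), σA ≤ μ) ∧
  (∀ μ ∈ spectrum ℝ (hess yB), σB ≤ μ) ∧
  (∃ ε > 0, ∀ μ ∈ spectrum ℝ (hess yA), μ ≠ σA → σA + ε ≤ μ) ∧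
  (∃ ε > 0, ∀ μ ∈ spectrum ℝ (hess yB), μ ≠ σB → σB + ε ≤ μ) ∧
  (∀ u : H, hess yA u = σA • u → ∃ c : ℝ, u = c • vA) ∧
  (∀ u : H, hess yB u = σB • u → ∃ c : ℝ, u = c • vB)

/-- `P_v` as a continuous linear map. -/
def projL (v : H) : H →L[ℝ] H := (innerSL ℝ (‖v‖⁻¹ • v)).smulRight (‖v‖⁻¹ • v)

/-- `P_v^⊥` as a continuous linear map. -/
def projPerpL (v : H) : H →L[ℝ] H := ContinuousLinearMap.id ℝ H - projL v

/-- `B(α) = P⊥ ∇²E(φ̄(α)) P⊥`. -/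
def Bop (hess : H → H →L[ℝ] H) (φb φb' : ℝ → H) (α : ℝ) : H →L[ℝ] H :=
  (projPerpL (φb' α)).comp ((hess (φb α)).comp (projPerpL (φb' α)))

/-- `D(α) y = −(y,t'(α))t(α) − (y,t(α))t'(α)`. -/
def Dop (t t' : ℝ → H) (α : ℝ) : H →L[ℝ] H :=
  -((innerSL ℝ (t' α)).smulRight (t α)) - (innerSL ℝ (t α)).smulRight (t' α)

/-- The operator `A(α)`. -/
def Aop {K : Type*} [NormedAddCommGroup K] [InnerProductSpace ℝ K] [CompleteSpace K]
    (E : H → ℝ) (hess : H → H →L[ℝ] H) (φb φb' t' : ℝ → H)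
    (Q Q' : ℝ → K →L[ℝ] H) (α : ℝ) : K →L[ℝ] K :=
  (ContinuousLinearMap.adjoint (Q α)).comp ((Bop hess φb φb' α).comp (Q α))
    - lamBar E φb φb' α •
        ((ContinuousLinearMap.adjoint (Q α)).comp
            ((Dop (fun s => ‖φb' s‖⁻¹ • φb' s) t' α).comp (Q α))
          - (ContinuousLinearMap.adjoint (Q α)).comp (Q' α))

/-- `ω_S`. -/
def omegaS (hess : H → H →L[ℝ] H) (yS : H) : ℝ :=
  sInf {l : ℝ | l ∈ spectrum ℝ (hess yS) ∧ 0 < l}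

/-- `ω_B`. -/
def omegaB (hess : H → H →L[ℝ] H) (yB : H) (σB : ℝ) : ℝ :=
  sInf {l : ℝ | l ∈ spectrum ℝ (hess yB) ∧ l ≠ σB}

/-- The tube `𝒰_ε` around the path. -/
def Utube (φb : ℝ → H) (ε : ℝ) : Set H := {y : H | ∃ α ∈ Icc (0:ℝ) 1, ‖y - φb α‖ ≤ ε}

/-- Restriction of a second derivative to a subspace. -/
def restrict2 (K : Submodule ℝ H) (T : H →L[ℝ] H →L[ℝ] ℝ) : K →L[ℝ] K →L[ℝ] ℝ :=
  (((ContinuousLinearMap.compL ℝ K H ℝ).flip K.subtypeL)).comp (T.comp K.subtypeL)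

/-- `C⁰` distance between `E'` (on the subspace `K`) and `E`, over `S`. -/
def subC0dist (K : Submodule ℝ H) (E : H → ℝ) (E' : K → ℝ) (S : Set K) : ℝ :=
  ⨆ y : S, |E' y.1 - E (y.1 : H)|

/-- `C¹` distance between `E'` (on the subspace `K`) and `E`, over `S`. -/
def subC1dist (K : Submodule ℝ H) (E : H → ℝ) (E' : K → ℝ) (S : Set K) : ℝ :=
  subC0dist K E E' S +
    ⨆ y : S, ‖fderiv ℝ E' y.1 - (fderiv ℝ E (y.1 : H)).comp K.subtypeL‖

/-- `C²` distance between `E'` (on the subspace `K`) and `E`, over `S`. -/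
def subC2dist (K : Submodule ℝ H) (E : H → ℝ) (E' : K → ℝ) (S : Set K) : ℝ :=
  subC1dist K E E' S +
    ⨆ y : S, @norm (K →L[ℝ] K →L[ℝ] ℝ)
        (@ContinuousLinearMap.hasOpNorm ℝ ℝ K (K →L[ℝ] ℝ) _ _ _ _ _ _ _)
        (fderiv ℝ (fun z => fderiv ℝ E' z) y.1
        - restrict2 K (fderiv ℝ (fun z => fderiv ℝ E z) (y.1 : H)))

/-!
The condition `Γ ≡ 0` forces constant speed `‖φ̄'‖ = L`, so `P⊥ ∇E(φ̄) = 0` reads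
`∇E(φ̄(α)) = λ̄(α) φ̄'(α)`. Differentiating this identity at a critical point, where `λ̄` vanishes,
gives `∇²E φ̄' = λ̄' φ̄'`.
-/

theorem hasDerivWithinAt_integral_Icc {F : Type*} [NormedAddCommGroup F] [NormedSpace ℝ F]
    [CompleteSpace F] {f : ℝ → F} {a b x : ℝ} (hf : ContinuousOn f (Icc a b))
    (hx : x ∈ Icc a b) :
    HasDerivWithinAt (fun u => ∫ t in a..u, f t) (f x) (Icc a b) x := by
  have : Fact (x ∈ Icc a b) := ⟨hx⟩
  refine intervalIntegral.integral_hasDerivWithinAt_right ?_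
    (hf.stronglyMeasurableAtFilter_nhdsWithin measurableSet_Icc x) (hf x hx)
  refine (hf.mono ?_).intervalIntegrable
  rw [uIcc_of_le hx.1]
  exact Icc_subset_Icc le_rfl hx.2

theorem norm_eq_len_of_Gam_eq_zero {F : Type*} [NormedAddCommGroup F] {φ' : ℝ → F}
    (hφ' : ContinuousOn φ' (Icc 0 1)) (hΓ : ∀ α ∈ Icc (0:ℝ) 1, Gam φ' α = 0)
    {α : ℝ} (hα : α ∈ Icc 0 1) : ‖φ' α‖ = len φ' := by
  have harc : EqOn (fun u => ∫ t in (0:ℝ)..u, ‖φ' t‖) (fun u => u * len φ') (Icc 0 1) :=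
    fun u hu => sub_eq_zero.1 (hΓ u hu)
  have hlin : HasDerivWithinAt (fun u => ∫ t in (0:ℝ)..u, ‖φ' t‖) (len φ') (Icc 0 1) α :=
    ((hasDerivWithinAt_id α _).mul_const (len φ')).congr harc (harc hα) |>.congr_deriv
      (one_mul _)
  exact (uniqueDiffOn_Icc_zero_one α hα).eq_deriv _
    (hasDerivWithinAt_integral_Icc hφ'.norm hα) hlin

theorem eq_smul_of_Pperp_eq_zero {V : Type*} [NormedAddCommGroup V] [InnerProductSpace ℝ V]
    {v g : V} (h : Pperp v g = 0) :
    g = ((‖v‖ ^ 2)⁻¹ * ⟪g, v⟫) • v := by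
  rw [Pperp, sub_eq_zero] at h
  refine h.trans ?_
  rw [Pproj, real_inner_smul_right, smul_smul, sq, mul_inv]
  congr 1
  ring

theorem HasDerivWithinAt.eq_smul_of_eqOn_smul {F : Type*} [NormedAddCommGroup F]
    [NormedSpace ℝ F] {s : Set ℝ} {x c' : ℝ} {c : ℝ → ℝ} {v g : ℝ → F} {v' g' : F}
    (hs : UniqueDiffWithinAt ℝ s x) (hx : x ∈ s) (hg : HasDerivWithinAt g g' s x)
    (hc : HasDerivWithinAt c c' s x) (hv : HasDerivWithinAt v v' s x)
    (hgcv : EqOn g (fun y => c y • v y) s) (hcx : c x = 0) : g' = c' • v x := by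
  have hcv := hc.smul hv
  rw [hcx, zero_smul, zero_add] at hcv
  exact hs.eq_deriv _ hg (hcv.congr hgcv (hgcv hx))

theorem contDiff_gradient {E : H → ℝ} {n : WithTop ℕ∞} (hE : ContDiff ℝ (n + 1) E) :
    ContDiff ℝ n (gradient E) :=
  (InnerProductSpace.toDual ℝ H).symm.contDiff.comp (hE.fderiv_right le_rfl)

theorem continuous_hess {E : H → ℝ} (hE : ContDiff ℝ 2 E) {hess : H → H →L[ℝ] H}
    (hhess : ∀ y, HasFDerivAt (gradient E) (hess y) y) : Continuous hess := by
  rw [show hess = fderiv ℝ (gradient E) from funext fun y => (hhess y).fderiv.symm]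
  exact (contDiff_gradient (n := 1) hE).continuous_fderiv one_ne_zero

def lamBarDeriv (E : H → ℝ) (hess : H → H →L[ℝ] H) (φ φ' φ'' : ℝ → H) (α : ℝ) : ℝ :=
  (len φ' ^ 2)⁻¹ * (⟪gradient E (φ α), φ'' α⟫ + ⟪hess (φ α) (φ' α), φ' α⟫)

section lamBar

variable {E : H → ℝ} {hess : H → H →L[ℝ] H} {φ φ' φ'' : ℝ → H} {s : Set ℝ} {α : ℝ}

theorem hasDerivWithinAt_lamBar (hgrad : HasFDerivAt (gradient E) (hess (φ α)) (φ α))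
    (hφ : HasDerivWithinAt φ (φ' α) s α) (hφ' : HasDerivWithinAt φ' (φ'' α) s α) :
    HasDerivWithinAt (lamBar E φ φ') (lamBarDeriv E hess φ φ' φ'' α) s α :=
  ((hgrad.comp_hasDerivWithinAt α hφ).inner ℝ hφ').const_mul _

theorem continuousOn_lamBarDeriv (hE : ContDiff ℝ 2 E)
    (hhess : ∀ y, HasFDerivAt (gradient E) (hess y) y) (hφ : ContinuousOn φ s)
    (hφ' : ContinuousOn φ' s) (hφ'' : ContinuousOn φ'' s) :
    ContinuousOn (lamBarDeriv E hess φ φ' φ'') s := by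
  have hgrad : ContinuousOn (fun α => gradient E (φ α)) s :=
    (contDiff_gradient (n := 1) hE).continuous.comp_continuousOn hφ
  have hhessφ : ContinuousOn (fun α => hess (φ α) (φ' α)) s :=
    ((continuous_hess hE hhess).comp_continuousOn hφ).clm_apply hφ'
  exact continuousOn_const.mul ((hgrad.inner hφ'').add (hhessφ.inner hφ'))

theorem hess_apply_eq_lamBarDeriv_smul (hs : UniqueDiffWithinAt ℝ s α) (hα : α ∈ s)
    (hgrad : HasFDerivAt (gradient E) (hess (φ α)) (φ α))
    (hφ : HasDerivWithinAt φ (φ' α) s α) (hφ' : HasDerivWithinAt φ' (φ'' α) s α)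
    (hpar : EqOn (fun β => gradient E (φ β)) (fun β => lamBar E φ φ' β • φ' β) s)
    (hcrit : gradient E (φ α) = 0) :
    hess (φ α) (φ' α) = lamBarDeriv E hess φ φ' φ'' α • φ' α :=
  (hgrad.comp_hasDerivWithinAt α hφ).eq_smul_of_eqOn_smul hs hα
    (hasDerivWithinAt_lamBar hgrad hφ hφ') hφ' hpar (by simp [lamBar, hcrit])

end lamBar

theorem gradient_eq_lamBar_smul_of_solvesMEP {E : H → ℝ} {φ φ' : ℝ → H}
    (hφ' : ContinuousOn φ' (Icc 0 1)) (hMEP : SolvesMEP E φ φ') :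
    EqOn (fun α => gradient E (φ α)) (fun α => lamBar E φ φ' α • φ' α) (Icc 0 1) := by
  intro α hα
  simpa only [lamBar, norm_eq_len_of_Gam_eq_zero hφ' hMEP.2 hα]
    using eq_smul_of_Pperp_eq_zero (hMEP.1 α hα)

theorem stmt6
    (E : H → ℝ) (hE : ContDiff ℝ 3 E)
    (hess : H → H →L[ℝ] H) (hhess : ∀ y : H, HasFDerivAt (gradient E) (hess y) y)
    (yA yB : H) (φb φb' φb'' : ℝ → H) (sbar : ℝ)
    (hA : AssumpA E hess yA yB φb φb' φb'' sbar) :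
    ∃ lam' : ℝ → ℝ,
      (∀ α ∈ Icc (0:ℝ) 1, HasDerivWithinAt (lamBar E φb φb') (lam' α) (Icc (0:ℝ) 1) α) ∧
      ContinuousOn lam' (Icc (0:ℝ) 1) ∧
      hess yA (φb' 0) = lam' 0 • φb' 0 ∧
      hess (φb sbar) (φb' sbar) = lam' sbar • φb' sbar ∧
      hess yB (φb' 1) = lam' 1 • φb' 1 := by
  obtain ⟨⟨⟨hφ, hφ'c⟩, hφ', hφ''c⟩, ⟨-, hφ0, hφ1, -⟩, hMEP, hsbar, hminA, hminB, hsaddle, -⟩ := hA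
  have hpar := gradient_eq_lamBar_smul_of_solvesMEP hφ'c hMEP
  have eigen : ∀ α ∈ Icc (0:ℝ) 1, gradient E (φb α) = 0 →
      hess (φb α) (φb' α) = lamBarDeriv E hess φb φb' φb'' α • φb' α := fun α hα =>
    hess_apply_eq_lamBarDeriv_smul (uniqueDiffOn_Icc_zero_one α hα) hα (hhess _) (hφ α hα)
      (hφ' α hα) hpar
  refine ⟨lamBarDeriv E hess φb φb' φb'',
    fun α hα => hasDerivWithinAt_lamBar (hhess _) (hφ α hα) (hφ' α hα),
    continuousOn_lamBarDeriv (hE.of_le (by norm_num)) hhess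
      (fun α hα => (hφ α hα).continuousWithinAt) hφ'c hφ''c, ?_, ?_, ?_⟩
  · simpa only [hφ0] using eigen 0 (left_mem_Icc.2 zero_le_one) (hφ0 ▸ hminA.1)
  · exact eigen sbar (Ioo_subset_Icc_self hsbar) hsaddle.1
  · simpa only [hφ1] using eigen 1 (right_mem_Icc.2 zero_le_one) (hφ1 ▸ hminB.1)
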